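/- If ξ is integrable and F_s-measurable with F_s = σ(F_s^W ∪ F_s^M), where F^W and F^M are independent filtrations, then E[ξ | F_s^M] = E[ξ | F_∞^M], where F_∞^M = σ(⋃_t F_t^M). -/

import Mathlib

/-!
Let `m₂ ≤ m₃` with `m₃` independent of `m₁`. For `m₃`-measurable `f`, independence splits integrals
over the generating π-system `{s ∩ t | s ∈ m₁, t ∈ m₂}` of `m₁ ⊔ m₂` as `μ s · ∫_t f`, so
`E[f | m₁ ⊔ m₂] = E[f | m₂]`. By self-adjointness of conditional expectation this transfers to
`(m₁ ⊔ m₂)`-measurable `ξ`: for `A ∈ m₃`,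
`∫_A ξ = ∫ ξ E[1_A | m₁ ⊔ m₂] = ∫ ξ E[1_A | m₂] = ∫_A E[ξ | m₂]`, i.e. `E[ξ | m₃] = E[ξ | m₂]`.
The theorem is the case `m₁ = F_s^W`, `m₂ = F_s^M`, `m₃ = F_∞^M`.
-/

open MeasureTheory ProbabilityTheory MeasurableSpace

section

variable {Ω E : Type*} [NormedAddCommGroup E] [NormedSpace ℝ E]
  {m₀ : MeasurableSpace Ω} {μ : Measure Ω}

theorem MeasurableSpace.sup_eq_generateFrom_image2_inter (m₁ m₂ : MeasurableSpace Ω) :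
    m₁ ⊔ m₂ = generateFrom
      (Set.image2 (· ∩ ·) {s | MeasurableSet[m₁] s} {t | MeasurableSet[m₂] t}) := by
  refine le_antisymm (sup_le ?_ ?_) (generateFrom_le ?_)
  · exact fun s hs => measurableSet_generateFrom ⟨s, hs, Set.univ, .univ, Set.inter_univ s⟩
  · exact fun t ht => measurableSet_generateFrom ⟨Set.univ, .univ, t, ht, Set.univ_inter t⟩
  · rintro _ ⟨s, hs, t, ht, rfl⟩
    exact (le_sup_left (b := m₂) _ hs).inter (le_sup_right (a := m₁) _ ht)

theorem IsPiSystem.image2_inter {C D : Set (Set Ω)} (hC : IsPiSystem C) (hD : IsPiSystem D) :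
    IsPiSystem (Set.image2 (· ∩ ·) C D) := by
  rintro _ ⟨s₁, hs₁, t₁, ht₁, rfl⟩ _ ⟨s₂, hs₂, t₂, ht₂, rfl⟩ hne
  rw [Set.inter_inter_inter_comm] at hne ⊢
  exact ⟨_, hC _ hs₁ _ hs₂ hne.left, _, hD _ ht₁ _ ht₂ hne.right, rfl⟩

theorem setIntegral_eq_of_isPiSystem {m : MeasurableSpace Ω} {S : Set (Set Ω)} (hm : m ≤ m₀)
    (h_gen : m = generateFrom S) (hS : IsPiSystem S) {f g : Ω → E}
    (hf : Integrable f μ) (hg : Integrable g μ) (h_univ : ∫ x, f x ∂μ = ∫ x, g x ∂μ)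
    (h_basic : ∀ s ∈ S, ∫ x in s, f x ∂μ = ∫ x in s, g x ∂μ)
    {t : Set Ω} (ht : MeasurableSet[m] t) : ∫ x in t, f x ∂μ = ∫ x in t, g x ∂μ := by
  induction t, ht using induction_on_inter h_gen hS with
  | empty => simp
  | basic s hs => exact h_basic s hs
  | compl s hs ih =>
    rw [setIntegral_compl (hm s hs) hf, setIntegral_compl (hm s hs) hg, ih, h_univ]
  | iUnion s hdisj hs ih =>
    rw [integral_iUnion (fun i => hm _ (hs i)) hdisj hf.integrableOn,
      integral_iUnion (fun i => hm _ (hs i)) hdisj hg.integrableOn]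
    simp_rw [ih]

section Independence

variable [CompleteSpace E] [IsFiniteMeasure μ] {m₁ m₂ m₃ : MeasurableSpace Ω}

theorem setIntegral_eq_measureReal_smul_integral_of_indep (hm₁ : m₁ ≤ m₀) (hm₂ : m₂ ≤ m₀)
    (hindep : Indep m₁ m₂ μ) {s : Set Ω} (hs : MeasurableSet[m₁] s) {g : Ω → E}
    (hg : StronglyMeasurable[m₂] g) (hg_int : Integrable g μ) :
    ∫ x in s, g x ∂μ = μ.real s • ∫ x, g x ∂μ := by
  rw [← setIntegral_condExp hm₁ hg_int hs,
    setIntegral_congr_ae (hm₁ s hs)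
      ((condExp_indep_eq hm₂ hm₁ hg hindep.symm).mono fun _ hx _ => hx),
    setIntegral_const]

theorem condExp_sup_eq_of_indep (hm₁ : m₁ ≤ m₀) (hm₃ : m₃ ≤ m₀) (h₂₃ : m₂ ≤ m₃)
    (hindep : Indep m₁ m₃ μ) {f : Ω → E} (hf : StronglyMeasurable[m₃] f)
    (hf_int : Integrable f μ) : μ[f | m₁ ⊔ m₂] =ᵐ[μ] μ[f | m₂] := by
  have hm₂ : m₂ ≤ m₀ := h₂₃.trans hm₃
  have hm₁₂ : m₁ ⊔ m₂ ≤ m₀ := sup_le hm₁ hm₂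
  refine (ae_eq_condExp_of_forall_setIntegral_eq hm₁₂ hf_int
    (fun _ _ _ => integrable_condExp.integrableOn) (fun u hu _ => ?_)
    (stronglyMeasurable_condExp.mono (le_sup_right : m₂ ≤ m₁ ⊔ m₂)).aestronglyMeasurable).symm
  refine setIntegral_eq_of_isPiSystem hm₁₂ (sup_eq_generateFrom_image2_inter m₁ m₂)
    ((@isPiSystem_measurableSet Ω m₁).image2_inter (@isPiSystem_measurableSet Ω m₂)) integrable_condExp hf_int
    (integral_condExp hm₂) ?_ hu
  rintro _ ⟨s, hs, t, ht, rfl⟩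
  have h_split : ∀ g : Ω → E, StronglyMeasurable[m₃] g → Integrable g μ →
      ∫ x in s ∩ t, g x ∂μ = μ.real s • ∫ x in t, g x ∂μ := fun g hg hg_int => by
    rw [← setIntegral_indicator (hm₂ t ht),
      setIntegral_eq_measureReal_smul_integral_of_indep hm₁ hm₃ hindep hs
        (hg.indicator (h₂₃ t ht)) (hg_int.indicator (hm₂ t ht)),
      integral_indicator (hm₂ t ht)]
  rw [h_split _ (stronglyMeasurable_condExp.mono h₂₃) integrable_condExp, h_split f hf hf_int,
    setIntegral_condExp hm₂ hf_int ht]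

end Independence

theorem integral_mul_condExp_eq_integral_condExp_mul {m : MeasurableSpace Ω} (hm : m ≤ m₀)
    [SigmaFinite (μ.trim hm)] {f g : Ω → ℝ} (hf : Integrable f μ) (hg : Integrable g μ)
    {R : ℝ} (hg_bdd : ∀ᵐ x ∂μ, |g x| ≤ R) :
    ∫ x, f x * (μ[g | m]) x ∂μ = ∫ x, (μ[f | m]) x * g x ∂μ := by
  have hfg : Integrable (fun x => f x * (μ[g | m]) x) μ :=
    hf.mul_bdd (stronglyMeasurable_condExp.mono hm).aestronglyMeasurable
      (by simpa only [Real.norm_eq_abs] using ae_bdd_abs_condExp_of_ae_bdd_abs (m := m) hg_bdd)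
  have hfg' : Integrable (fun x => (μ[f | m]) x * g x) μ :=
    integrable_condExp.mul_bdd hg.aestronglyMeasurable
      (by simpa only [Real.norm_eq_abs] using hg_bdd)
  calc ∫ x, f x * (μ[g | m]) x ∂μ = ∫ x, (μ[fun x => f x * (μ[g | m]) x | m]) x ∂μ :=
        (integral_condExp hm).symm
    _ = ∫ x, (μ[f | m]) x * (μ[g | m]) x ∂μ :=
        integral_congr_ae (condExp_mul_of_stronglyMeasurable_right stronglyMeasurable_condExp hfg hf)
    _ = ∫ x, (μ[fun x => (μ[f | m]) x * g x | m]) x ∂μ :=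
        integral_congr_ae
          (condExp_mul_of_stronglyMeasurable_left stronglyMeasurable_condExp hfg' hg).symm
    _ = ∫ x, (μ[f | m]) x * g x ∂μ := integral_condExp hm

theorem condExp_eq_of_indep_of_stronglyMeasurable_sup [IsFiniteMeasure μ]
    {m₁ m₂ m₃ : MeasurableSpace Ω} (hm₁ : m₁ ≤ m₀) (hm₃ : m₃ ≤ m₀) (h₂₃ : m₂ ≤ m₃)
    (hindep : Indep m₁ m₃ μ) {ξ : Ω → ℝ} (hξ : StronglyMeasurable[m₁ ⊔ m₂] ξ)
    (hξ_int : Integrable ξ μ) : μ[ξ | m₃] =ᵐ[μ] μ[ξ | m₂] := by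
  have hm₂ : m₂ ≤ m₀ := h₂₃.trans hm₃
  refine (ae_eq_condExp_of_forall_setIntegral_eq hm₃ hξ_int
    (fun _ _ _ => integrable_condExp.integrableOn) (fun A hA _ => ?_)
    (stronglyMeasurable_condExp.mono h₂₃).aestronglyMeasurable).symm
  set χ : Ω → ℝ := A.indicator 1
  have hχ_int : Integrable χ μ := (integrable_const 1).indicator (hm₃ A hA)
  have hχ_bdd : ∀ᵐ x ∂μ, |χ x| ≤ 1 := .of_forall fun x => by
    by_cases hx : x ∈ A <;> simp [χ, hx]
  have h_setIntegral : ∀ h : Ω → ℝ, ∫ x in A, h x ∂μ = ∫ x, h x * χ x ∂μ := fun h => by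
    rw [← integral_indicator (hm₃ A hA)]
    congr 1 with x
    by_cases hx : x ∈ A <;> simp [χ, hx]
  calc ∫ x in A, (μ[ξ | m₂]) x ∂μ = ∫ x, (μ[ξ | m₂]) x * χ x ∂μ := h_setIntegral _
    _ = ∫ x, ξ x * (μ[χ | m₂]) x ∂μ :=
        (integral_mul_condExp_eq_integral_condExp_mul hm₂ hξ_int hχ_int hχ_bdd).symm
    _ = ∫ x, ξ x * (μ[χ | m₁ ⊔ m₂]) x ∂μ :=
        integral_congr_ae ((condExp_sup_eq_of_indep hm₁ hm₃ h₂₃ hindep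
          (stronglyMeasurable_const.indicator hA) hχ_int).mono fun x hx => congrArg (ξ x * ·) hx.symm)
    _ = ∫ x, (μ[ξ | m₁ ⊔ m₂]) x * χ x ∂μ :=
        integral_mul_condExp_eq_integral_condExp_mul (sup_le hm₁ hm₂) hξ_int hχ_int hχ_bdd
    _ = ∫ x in A, ξ x ∂μ := by
        rw [condExp_of_stronglyMeasurable (sup_le hm₁ hm₂) hξ hξ_int, h_setIntegral]
end

theorem stmt1_general {Ω : Type*} [m0 : MeasurableSpace Ω] (μ : Measure Ω) [IsProbabilityMeasure μ]
    (FW FM : ℝ → MeasurableSpace Ω)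
    (hFWle : ∀ t, FW t ≤ m0) (hFMle : ∀ t, FM t ≤ m0)
    (hindep : Indep (⨆ t, FW t) (⨆ t, FM t) μ)
    (s : ℝ)
    (ξ : Ω → ℝ) (hmeas : Measurable[FW s ⊔ FM s] ξ) (hint : Integrable ξ μ) :
    μ[ξ | FM s] =ᵐ[μ] μ[ξ | ⨆ u, FM u] :=
  (condExp_eq_of_indep_of_stronglyMeasurable_sup (hFWle s) (iSup_le hFMle) (le_iSup FM s)
    (indep_of_indep_of_le_left hindep (le_iSup FW s)) hmeas.stronglyMeasurable hint).symm

/-- If `ξ` is integrable and `F_s`-measurable with `F_s = σ(F_s^W ∪ F_s^M)`, where `F^W` and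
`F^M` are independent filtrations, then `E[ξ | F_s^M] = E[ξ | F_∞^M]`. -/
theorem stmt1 {Ω : Type*} [m0 : MeasurableSpace Ω] (μ : Measure Ω) [IsProbabilityMeasure μ]
    (FW FM : ℝ → MeasurableSpace Ω)
    (hFWmono : Monotone FW) (hFMmono : Monotone FM)
    (hFWle : ∀ t, FW t ≤ m0) (hFMle : ∀ t, FM t ≤ m0)
    (hindep : Indep (⨆ t, FW t) (⨆ t, FM t) μ)
    (s : ℝ)
    (ξ : Ω → ℝ) (hmeas : Measurable[FW s ⊔ FM s] ξ) (hint : Integrable ξ μ) :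
    μ[ξ | FM s] =ᵐ[μ] μ[ξ | ⨆ u, FM u] :=
  stmt1_general (m0 := m0) μ FW FM hFWle hFMle hindep s ξ hmeas hint
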